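/- arXiv:1411.2681 — 3 statements merged into one kernel-verified Lean document; each statement's English description precedes it below -/
import Mathlib

section
/- Pointwise convergence does not imply convergence in ℍ: the functions fₙ(x) = xⁿ(1 − xⁿ) converge pointwise to 0 on [0,1], yet ℍ(fₙ, f₀) → 0 where f₀(1) = 1/4 and f₀(x) = 0 for x ∈ [0,1); in particular ℍ(fₙ, 0) does not converge to 0. -/
/-!
For `x ∈ [0,1]` the bound `(n + 1) xⁿ (1 - x) ≤ 1` (compare `xⁿ` with the terms of the geometric
sum `∑_{i ≤ n} xⁱ = (1 - xⁿ⁺¹)/(1 - x)`) shows that every point `(x, y)` of the hypograph of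
`fₙ` has `min(y, 1 - x) ≤ 1/√(n+1)`: it is close to the bottom edge `[0,1] × {0}` or to the spike
`{1} × [0, 1/4]` of the hypograph of `f₀`. Conversely, the spike is within `1 - xₙ` of the
hypograph of `fₙ`, where `xₙ = 2^(-1/n)` is the point where `fₙ` attains its maximum `1/4`.
That maximum also keeps `ℍ(fₙ, 0) ≥ 1/4`.
-/

open Set Metric Filter

def hypo (f : ℝ → ℝ) : Set (EuclideanSpace ℝ (Fin 2)) :=
  {p | p 0 ∈ Set.Icc (0:ℝ) 1 ∧ 0 ≤ p 1 ∧ p 1 ≤ f (p 0)}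

noncomputable def HH (f g : ℝ → ℝ) : ℝ := Metric.hausdorffDist (hypo f) (hypo g)

open Topology

lemma EuclideanSpace.dist_le_sum_dist {ι : Type*} [Fintype ι] (p q : EuclideanSpace ℝ ι) :
    dist p q ≤ ∑ i, dist (p i) (q i) := by
  rw [EuclideanSpace.dist_eq, Real.sqrt_le_left (by positivity)]
  exact Finset.sum_sq_le_sq_sum_of_nonneg fun i _ ↦ dist_nonneg

lemma EuclideanSpace.dist_le_dist_add_dist (p q : EuclideanSpace ℝ (Fin 2)) :
    dist p q ≤ dist (p 0) (q 0) + dist (p 1) (q 1) := by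
  simpa only [Fin.sum_univ_two] using dist_le_sum_dist p q

lemma Real.min_le_sqrt_of_mul_le {a b c : ℝ} (ha : 0 ≤ a) (hb : 0 ≤ b) (h : a * b ≤ c) :
    min a b ≤ √c :=
  Real.le_sqrt_of_sq_le <| by nlinarith [min_le_left a b, min_le_right a b, le_min ha hb]

lemma pow_mul_one_sub_le_one_div {x : ℝ} (hx₀ : 0 ≤ x) (hx₁ : x ≤ 1) (n : ℕ) :
    x ^ n * (1 - x) ≤ 1 / (n + 1) := by
  have hsum : (n + 1 : ℝ) * x ^ n ≤ ∑ i ∈ Finset.range (n + 1), x ^ i := by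
    simpa using Finset.card_nsmul_le_sum (Finset.range (n + 1)) (x ^ ·) (x ^ n)
      fun i hi ↦ pow_le_pow_of_le_one hx₀ hx₁ (Finset.mem_range_succ_iff.mp hi)
  have hgeom := geom_sum_mul_neg x (n + 1)
  rw [le_div_iff₀ (by positivity)]
  nlinarith [pow_nonneg hx₀ (n + 1)]

lemma hypo_nonempty {f : ℝ → ℝ} {a : ℝ} (ha : a ∈ Icc (0 : ℝ) 1) (hfa : 0 ≤ f a) :
    (hypo f).Nonempty :=
  ⟨!₂[a, 0], ha, le_rfl, hfa⟩

lemma isBounded_hypo {f : ℝ → ℝ} {C : ℝ} (hC : ∀ x ∈ Icc (0 : ℝ) 1, f x ≤ C) :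
    Bornology.IsBounded (hypo f) := by
  refine (isBounded_closedBall (x := 0) (r := 1 + C)).subset fun p ⟨hp₀, hp₁, hpf⟩ ↦ ?_
  have h := EuclideanSpace.dist_le_dist_add_dist p 0
  simp only [PiLp.zero_apply, Real.dist_eq, sub_zero, abs_of_nonneg hp₀.1, abs_of_nonneg hp₁] at h
  rw [mem_closedBall]
  linarith [hp₀.2, hC _ hp₀]

lemma le_HH_zero {f : ℝ → ℝ} {a C : ℝ} (ha : a ∈ Icc (0 : ℝ) 1) (hfa : 0 ≤ f a)
    (hC : ∀ x ∈ Icc (0 : ℝ) 1, f x ≤ C) : f a ≤ HH f 0 := by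
  have hfin : Metric.hausdorffEDist (hypo f) (hypo 0) ≠ ⊤ :=
    hausdorffEDist_ne_top_of_nonempty_of_bounded (hypo_nonempty ha hfa)
      (hypo_nonempty ha le_rfl) (isBounded_hypo hC) (isBounded_hypo (C := 0) fun _ _ ↦ le_rfl)
  have hmem : !₂[a, f a] ∈ hypo f := ⟨ha, hfa, le_rfl⟩
  refine le_trans ?_ (infDist_le_hausdorffDist_of_mem hmem hfin)
  refine (le_infDist (hypo_nonempty ha le_rfl)).2 fun q ⟨_, hq₀, hq₁⟩ ↦ ?_
  have hq : q 1 = 0 := le_antisymm hq₁ hq₀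
  simpa [hq, Real.dist_eq, abs_of_nonneg hfa] using PiLp.dist_apply_le !₂[a, f a] q 1

def powBump (n : ℕ) (x : ℝ) : ℝ := x ^ n * (1 - x ^ n)

noncomputable def quarterAtOne (x : ℝ) : ℝ := if x = 1 then 1 / 4 else 0

noncomputable def halfRoot (n : ℕ) : ℝ := (2⁻¹ : ℝ) ^ ((n : ℝ)⁻¹)

lemma powBump_nonneg (n : ℕ) {x : ℝ} (hx : x ∈ Icc (0 : ℝ) 1) : 0 ≤ powBump n x :=
  mul_nonneg (pow_nonneg hx.1 n) (sub_nonneg.2 (pow_le_one₀ hx.1 hx.2))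

lemma powBump_le_quarter (n : ℕ) (x : ℝ) : powBump n x ≤ 1 / 4 := by
  unfold powBump; nlinarith [sq_nonneg (x ^ n - 1 / 2)]

lemma powBump_le_pow (n : ℕ) {x : ℝ} (hx : x ∈ Icc (0 : ℝ) 1) : powBump n x ≤ x ^ n :=
  mul_le_of_le_one_right (pow_nonneg hx.1 n) (by linarith [pow_nonneg hx.1 n])

lemma tendsto_powBump {x : ℝ} (hx : x ∈ Icc (0 : ℝ) 1) :
    Tendsto (powBump · x) atTop (𝓝 0) := by
  rcases hx.2.eq_or_lt with rfl | hx₁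
  · simp [powBump]
  · have hpow := tendsto_pow_atTop_nhds_zero_of_lt_one hx.1 hx₁
    simpa [powBump] using hpow.mul (tendsto_const_nhds.sub hpow)

lemma halfRoot_mem_Icc (n : ℕ) : halfRoot n ∈ Icc (0 : ℝ) 1 :=
  ⟨by unfold halfRoot; positivity,
    Real.rpow_le_one (by norm_num) (by norm_num) (by positivity)⟩

lemma halfRoot_pow {n : ℕ} (hn : n ≠ 0) : halfRoot n ^ n = 2⁻¹ :=
  Real.rpow_inv_natCast_pow (by norm_num) hn

lemma powBump_halfRoot {n : ℕ} (hn : n ≠ 0) : powBump n (halfRoot n) = 1 / 4 := by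
  rw [powBump, halfRoot_pow hn]; norm_num

lemma tendsto_halfRoot : Tendsto halfRoot atTop (𝓝 1) := by
  have h := ((Real.continuousAt_const_rpow (a := 2⁻¹) (b := 0) (by norm_num)).tendsto.comp
    (tendsto_inv_atTop_zero.comp tendsto_natCast_atTop_atTop))
  rwa [Real.rpow_zero] at h

lemma exists_near_hypo_quarterAtOne (n : ℕ) {p : EuclideanSpace ℝ (Fin 2)}
    (hp : p ∈ hypo (powBump n)) : ∃ q ∈ hypo quarterAtOne, dist p q ≤ √(1 / (n + 1)) := by
  obtain ⟨hx, hy₀, hyf⟩ := hp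
  have hmin : min (p 1) (1 - p 0) ≤ √(1 / (n + 1)) := by
    refine Real.min_le_sqrt_of_mul_le hy₀ (by linarith [hx.2]) ?_
    calc p 1 * (1 - p 0) ≤ p 0 ^ n * (1 - p 0) :=
          mul_le_mul_of_nonneg_right (hyf.trans (powBump_le_pow n hx)) (by linarith [hx.2])
      _ ≤ 1 / (n + 1) := pow_mul_one_sub_le_one_div hx.1 hx.2 n
  rcases le_total (p 1) (1 - p 0) with hle | hle
  · refine ⟨!₂[p 0, 0], ⟨hx, le_rfl, ?_⟩, ?_⟩
    · unfold quarterAtOne; split_ifs <;> norm_num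
    · have h := EuclideanSpace.dist_le_dist_add_dist p !₂[p 0, 0]
      simp only [Matrix.cons_val_zero, Matrix.cons_val_one, Real.dist_eq,
        sub_self, abs_zero, sub_zero, abs_of_nonneg hy₀, zero_add] at h
      exact h.trans (by simpa [hle] using hmin)
  · refine ⟨!₂[1, p 1], ⟨right_mem_Icc.2 zero_le_one, hy₀, ?_⟩, ?_⟩
    · simpa [quarterAtOne] using hyf.trans (powBump_le_quarter n _)
    · have h := EuclideanSpace.dist_le_dist_add_dist p !₂[1, p 1]
      simp only [Matrix.cons_val_zero, Matrix.cons_val_one, Real.dist_eq,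
        sub_self, abs_zero, add_zero, abs_sub_comm (p 0), abs_of_nonneg (sub_nonneg.2 hx.2)] at h
      exact h.trans (by simpa [hle] using hmin)

lemma exists_near_hypo_powBump {n : ℕ} (hn : n ≠ 0) {q : EuclideanSpace ℝ (Fin 2)}
    (hq : q ∈ hypo quarterAtOne) : ∃ p ∈ hypo (powBump n), dist q p ≤ 1 - halfRoot n := by
  obtain ⟨hx, hy₀, hyf⟩ := hq
  by_cases hx₁ : q 0 = 1
  · refine ⟨!₂[halfRoot n, q 1], ⟨halfRoot_mem_Icc n, hy₀, ?_⟩, ?_⟩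
    · simpa [powBump_halfRoot hn, quarterAtOne, hx₁] using hyf
    · simpa only [Matrix.cons_val_zero, Matrix.cons_val_one, Real.dist_eq, sub_self, abs_zero,
        add_zero, hx₁, abs_of_nonneg (sub_nonneg.2 (halfRoot_mem_Icc n).2)]
        using EuclideanSpace.dist_le_dist_add_dist q !₂[halfRoot n, q 1]
  · have hy : q 1 = 0 := le_antisymm (by simpa [quarterAtOne, hx₁] using hyf) hy₀
    refine ⟨!₂[q 0, 0], ⟨hx, le_rfl, powBump_nonneg n hx⟩, ?_⟩
    have h := EuclideanSpace.dist_le_dist_add_dist q !₂[q 0, 0]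
    simp only [Matrix.cons_val_zero, Matrix.cons_val_one, Real.dist_eq,
      sub_self, abs_zero, hy, add_zero] at h
    linarith [(halfRoot_mem_Icc n).2]

lemma HH_powBump_quarterAtOne_le {n : ℕ} (hn : n ≠ 0) :
    HH (powBump n) quarterAtOne ≤ √(1 / (n + 1)) + (1 - halfRoot n) := by
  have h₁ := (halfRoot_mem_Icc n).2
  refine hausdorffDist_le_of_mem_dist (by positivity) (fun p hp ↦ ?_) (fun q hq ↦ ?_)
  · obtain ⟨q, hq, hpq⟩ := exists_near_hypo_quarterAtOne n hp
    exact ⟨q, hq, by linarith⟩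
  · obtain ⟨p, hp, hqp⟩ := exists_near_hypo_powBump hn hq
    exact ⟨p, hp, by linarith [Real.sqrt_nonneg (1 / (n + 1))]⟩

lemma tendsto_HH_powBump_quarterAtOne :
    Tendsto (fun n ↦ HH (powBump n) quarterAtOne) atTop (𝓝 0) := by
  have hbound : Tendsto (fun n : ℕ ↦ √(1 / (n + 1)) + (1 - halfRoot n)) atTop (𝓝 0) := by
    simpa using (tendsto_one_div_add_atTop_nhds_zero_nat.sqrt).add
      ((tendsto_const_nhds (x := 1)).sub tendsto_halfRoot)
  refine tendsto_of_tendsto_of_tendsto_of_le_of_le' tendsto_const_nhds hbound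
    (Eventually.of_forall fun _ ↦ hausdorffDist_nonneg) ?_
  filter_upwards [eventually_ne_atTop 0] with n hn using HH_powBump_quarterAtOne_le hn

lemma quarter_le_HH_powBump_zero {n : ℕ} (hn : n ≠ 0) : 1 / 4 ≤ HH (powBump n) 0 := by
  have h := le_HH_zero (halfRoot_mem_Icc n) (powBump_nonneg n (halfRoot_mem_Icc n))
    fun x _ ↦ powBump_le_quarter n x
  rwa [powBump_halfRoot hn] at h

/-- Pointwise convergence does not imply convergence in `ℍ`:
`fₙ(x) = xⁿ(1 − xⁿ)` converges pointwise to `0` on `[0,1]`, yet it converges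
in `ℍ` to `f₀` with `f₀(1) = 1/4`, `f₀(x) = 0` for `x ∈ [0,1)`; in particular
`ℍ(fₙ, 0)` does not converge to `0`. -/
theorem stmt_5 :
    (∀ x ∈ Set.Icc (0:ℝ) 1,
      Filter.Tendsto (fun n : ℕ => x ^ n * (1 - x ^ n)) Filter.atTop (nhds 0)) ∧
    Filter.Tendsto
      (fun n : ℕ => HH (fun x : ℝ => x ^ n * (1 - x ^ n))
        (fun x : ℝ => if x = 1 then (1/4 : ℝ) else 0))
      Filter.atTop (nhds 0) ∧
    ¬ Filter.Tendsto
      (fun n : ℕ => HH (fun x : ℝ => x ^ n * (1 - x ^ n)) (fun _ : ℝ => (0:ℝ)))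
      Filter.atTop (nhds 0) := by
  refine ⟨fun x hx ↦ tendsto_powBump hx, tendsto_HH_powBump_quarterAtOne, fun h ↦ ?_⟩
  obtain ⟨n, hlt, hn⟩ :=
    ((h.eventually (gt_mem_nhds (by norm_num : (0 : ℝ) < 1 / 4))).and
      (eventually_ne_atTop 0)).exists
  exact (quarter_le_HH_powBump_zero hn).not_gt hlt
end

section
/- The metric space (𝓔, ℍ) of nonnegative USC functions on [0,1] with hypograph Hausdorff distance is complete. -/
open Set Metric Filter

def memE (f : ℝ → ℝ) : Prop :=
  (∀ x ∈ Set.Icc (0:ℝ) 1, 0 ≤ f x) ∧ UpperSemicontinuousOn f (Set.Icc (0:ℝ) 1)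

/-!
The hypograph map is an isometry from `𝓔` into the nonempty compact subsets of `ℝ²` with the
Hausdorff metric, a complete space, so it suffices that its image is closed. A compact set `K` is
the hypograph of a function in `𝓔` as soon as it contains `[0,1] × {0}`, lies in the strip
`[0,1] × [0,∞)` and is stable under the vertical contractions `(x, y) ↦ (x, t y)`, `t ∈ [0,1]`:
take `f x = max {y | (x, y) ∈ K}`, which is upper semicontinuous because `K` is closed. Each of
these three conditions is closed for the Hausdorff metric, since each can be written as a family of
inequalities between the `1`-Lipschitz functions `K ↦ infDist x K`.
-/

open TopologicalSpace

theorem LipschitzWith.infDist_le_of_mapsTo {α : Type*} [PseudoMetricSpace α] {φ : α → α}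
    (hφ : LipschitzWith 1 φ) {s : Set α} (hs : s.Nonempty) (hmaps : MapsTo φ s s) (x : α) :
    infDist (φ x) s ≤ infDist x s :=
  (le_infDist hs).2 fun y hy => (infDist_le_dist_of_mem (hmaps hy)).trans <| by
    simpa using hφ.dist_le_mul x y

namespace TopologicalSpace.NonemptyCompacts

variable {α : Type*} [MetricSpace α]

theorem isClosed_setOf_mem (x : α) : IsClosed {K : NonemptyCompacts α | x ∈ K} := by
  have : {K : NonemptyCompacts α | x ∈ K} =
      (fun K : NonemptyCompacts α => infDist x K) ⁻¹' {0} := by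
    ext K; exact K.isCompact.isClosed.mem_iff_infDist_zero K.nonempty
  rw [this]
  exact isClosed_singleton.preimage (lipschitz_infDist_set x).continuous

theorem isClosed_setOf_superset (s : Set α) : IsClosed {K : NonemptyCompacts α | s ⊆ K} := by
  simp only [ofPred_forall, subset_def]
  exact isClosed_biInter fun x _ => isClosed_setOf_mem x

theorem isClosed_setOf_subset {s : Set α} (hs : IsClosed s) (hne : s.Nonempty) :
    IsClosed {K : NonemptyCompacts α | (K : Set α) ⊆ s} := by
  have : {K : NonemptyCompacts α | (K : Set α) ⊆ s} =
      ⋂ x, {K : NonemptyCompacts α | infDist x s ≤ infDist x K} := by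
    ext K
    simp only [mem_ofPred_eq, mem_iInter]
    refine ⟨fun h x => infDist_le_infDist_of_subset h K.nonempty, fun h x hx => ?_⟩
    rw [hs.mem_iff_infDist_zero hne]
    exact le_antisymm ((h x).trans_eq (infDist_zero_of_mem hx)) infDist_nonneg
  rw [this]
  exact isClosed_iInter fun x => isClosed_le continuous_const (lipschitz_infDist_set x).continuous

theorem isClosed_setOf_mapsTo {φ : α → α} (hφ : LipschitzWith 1 φ) :
    IsClosed {K : NonemptyCompacts α | MapsTo φ K K} := by
  have : {K : NonemptyCompacts α | MapsTo φ K K} =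
      ⋂ x, {K : NonemptyCompacts α | infDist (φ x) K ≤ infDist x K} := by
    ext K
    simp only [mem_ofPred_eq, mem_iInter]
    refine ⟨fun h x => hφ.infDist_le_of_mapsTo K.nonempty h x, fun h x hx => ?_⟩
    rw [K.isCompact.isClosed.mem_iff_infDist_zero K.nonempty]
    exact le_antisymm ((h x).trans_eq (infDist_zero_of_mem hx)) infDist_nonneg
  rw [this]
  exact isClosed_iInter fun x =>
    isClosed_le (lipschitz_infDist_set _).continuous (lipschitz_infDist_set x).continuous

end TopologicalSpace.NonemptyCompacts

local notation "ℝ²" => EuclideanSpace ℝ (Fin 2)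

noncomputable def pt (x y : ℝ) : ℝ² := WithLp.toLp 2 ![x, y]

noncomputable def vscale (t : ℝ) (p : ℝ²) : ℝ² := pt (p 0) (t * p 1)

def strip : Set ℝ² := {p | p 0 ∈ Icc (0:ℝ) 1 ∧ 0 ≤ p 1}

@[simp] lemma pt_apply_zero (x y : ℝ) : pt x y 0 = x := rfl

@[simp] lemma pt_apply_one (x y : ℝ) : pt x y 1 = y := rfl

lemma pt_eta (p : ℝ²) : pt (p 0) (p 1) = p := by
  ext i; fin_cases i <;> rfl

lemma mem_hypo_pt {f : ℝ → ℝ} {x y : ℝ} :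
    pt x y ∈ hypo f ↔ x ∈ Icc (0:ℝ) 1 ∧ 0 ≤ y ∧ y ≤ f x := Iff.rfl

lemma continuous_pt : Continuous fun q : ℝ × ℝ => pt q.1 q.2 := by
  unfold pt; fun_prop

lemma isometry_pt (x : ℝ) : Isometry (pt x) :=
  Isometry.of_dist_eq fun a b => by
    simp [EuclideanSpace.dist_eq, Fin.sum_univ_two, pt]

lemma lipschitzWith_vscale {t : ℝ} (ht : |t| ≤ 1) : LipschitzWith 1 (vscale t) :=
  LipschitzWith.of_dist_le_mul fun p q => by
    simp only [EuclideanSpace.dist_eq, Fin.sum_univ_two, vscale, pt_apply_zero, pt_apply_one,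
      NNReal.coe_one, one_mul, Real.dist_eq, ← mul_sub, abs_mul]
    gcongr
    exact mul_le_of_le_one_left (abs_nonneg _) ht

lemma isClosed_hypo {f : ℝ → ℝ} (hf : UpperSemicontinuousOn f (Icc 0 1)) : IsClosed (hypo f) := by
  have hH := (upperSemicontinuousOn_iff_isClosed_hypograph isClosed_Icc).1 hf
  have : hypo f = (fun p : ℝ² => (p 0, p 1)) ⁻¹' {q | q.1 ∈ Icc 0 1 ∧ q.2 ≤ f q.1} ∩
      {p | 0 ≤ p 1} := by
    ext p; simp only [hypo, mem_inter_iff, mem_preimage, mem_ofPred_eq]; tauto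
  rw [this]
  exact (hH.preimage (by fun_prop)).inter (isClosed_le continuous_const (by fun_prop))

lemma upperSemicontinuousOn_of_isClosed_hypo {f : ℝ → ℝ} (hf0 : ∀ x ∈ Icc (0:ℝ) 1, 0 ≤ f x)
    (hf : IsClosed (hypo f)) : UpperSemicontinuousOn f (Icc 0 1) := by
  rw [upperSemicontinuousOn_iff_isClosed_hypograph isClosed_Icc]
  have : {q : ℝ × ℝ | q.1 ∈ Icc 0 1 ∧ q.2 ≤ f q.1} =
      (fun q : ℝ × ℝ => pt q.1 q.2) ⁻¹' hypo f ∪ Icc 0 1 ×ˢ Iic 0 := by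
    ext ⟨x, y⟩
    simp only [mem_ofPred_eq, mem_union, mem_preimage, mem_hypo_pt, mem_prod, mem_Iic]
    constructor
    · rintro ⟨hx, hy⟩
      rcases le_total 0 y with h | h
      exacts [Or.inl ⟨hx, h, hy⟩, Or.inr ⟨hx, h⟩]
    · rintro (⟨hx, -, hy⟩ | ⟨hx, hy⟩)
      exacts [⟨hx, hy⟩, ⟨hx, hy.trans (hf0 x hx)⟩]
  rw [this]
  exact (hf.preimage continuous_pt).union (isClosed_Icc.prod isClosed_Iic)

lemma hypo_zero_subset {f : ℝ → ℝ} (hf0 : ∀ x ∈ Icc (0:ℝ) 1, 0 ≤ f x) : hypo 0 ⊆ hypo f :=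
  fun _ ⟨hx, hy, hy'⟩ => ⟨hx, hy, hy'.trans (hf0 _ hx)⟩

lemma isCompact_hypo {f : ℝ → ℝ} (hf : memE f) : IsCompact (hypo f) := by
  obtain ⟨M, hM⟩ := hf.2.bddAbove_of_isCompact isCompact_Icc
  have hsub : hypo f ⊆ (fun q : ℝ × ℝ => pt q.1 q.2) '' (Icc 0 1 ×ˢ Icc 0 M) :=
    fun p ⟨hx, hy, hy'⟩ =>
      ⟨(p 0, p 1), ⟨hx, hy, hy'.trans (hM (mem_image_of_mem f hx))⟩, pt_eta p⟩
  exact ((isCompact_Icc.prod isCompact_Icc).image continuous_pt).of_isClosed_subset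
    (isClosed_hypo hf.2) hsub

noncomputable def hypoCompacts {f : ℝ → ℝ} (hf : memE f) : NonemptyCompacts ℝ² :=
  ⟨⟨hypo f, isCompact_hypo hf⟩, pt 0 0, hypo_zero_subset hf.1 ⟨by simp, le_rfl, le_rfl⟩⟩

def IsHypoShaped (K : Set ℝ²) : Prop :=
  hypo 0 ⊆ K ∧ K ⊆ strip ∧ ∀ t ∈ Icc (0:ℝ) 1, MapsTo (vscale t) K K

lemma isHypoShaped_hypo {f : ℝ → ℝ} (hf0 : ∀ x ∈ Icc (0:ℝ) 1, 0 ≤ f x) :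
    IsHypoShaped (hypo f) := by
  refine ⟨hypo_zero_subset hf0, fun p hp => ⟨hp.1, hp.2.1⟩, fun t ht p ⟨hx, hy, hy'⟩ =>
    ⟨hx, mul_nonneg ht.1 hy, ?_⟩⟩
  exact (mul_le_of_le_one_left hy ht.2).trans hy'

lemma isClosed_setOf_isHypoShaped :
    IsClosed {K : NonemptyCompacts ℝ² | IsHypoShaped K} := by
  have hstrip : IsClosed strip :=
    (isClosed_Icc.preimage (by fun_prop : Continuous fun p : ℝ² => p 0)).inter
      (isClosed_le continuous_const (by fun_prop : Continuous fun p : ℝ² => p 1))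
  have hscale : IsClosed {K : NonemptyCompacts ℝ² |
      ∀ t ∈ Icc (0:ℝ) 1, MapsTo (vscale t) K K} := by
    simp only [ofPred_forall]
    exact isClosed_biInter fun t ht => NonemptyCompacts.isClosed_setOf_mapsTo
      (lipschitzWith_vscale (abs_le.2 ⟨by linarith [ht.1], ht.2⟩))
  exact (NonemptyCompacts.isClosed_setOf_superset _).inter
    ((NonemptyCompacts.isClosed_setOf_subset hstrip ⟨pt 0 0, by simp [strip]⟩).inter hscale)

lemma exists_memE_hypo_eq {K : Set ℝ²} (hK : IsCompact K) (hshape : IsHypoShaped K) :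
    ∃ f, memE f ∧ hypo f = K := by
  obtain ⟨h0, hstrip, hscale⟩ := hshape
  set f : ℝ → ℝ := fun x => sSup (pt x ⁻¹' K)
  have hslice : ∀ x, IsCompact (pt x ⁻¹' K) := fun x =>
    (isometry_pt x).isClosedEmbedding.isCompact_preimage hK
  have hzero : ∀ x ∈ Icc (0:ℝ) 1, pt x 0 ∈ K := fun x hx => h0 ⟨hx, le_rfl, le_rfl⟩
  have hmax : ∀ x ∈ Icc (0:ℝ) 1, pt x (f x) ∈ K := fun x hx =>
    (hslice x).sSup_mem ⟨0, hzero x hx⟩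
  have hf0 : ∀ x ∈ Icc (0:ℝ) 1, 0 ≤ f x := fun x hx =>
    le_csSup (hslice x).bddAbove (hzero x hx)
  have hfK : hypo f = K := by
    refine Subset.antisymm (fun p ⟨hx, hy, hy'⟩ => ?_) fun p hp => ?_
    · -- `p` is the image of the top point `(x, f x)` of `K` under the contraction by
      -- `y / f x`; if `f x = 0` then `y = 0`, and `0 / 0 = 0` still does the job
      have hp := hscale (p 1 / f (p 0))
        ⟨div_nonneg hy (hf0 _ hx), div_le_one_of_le₀ hy' (hf0 _ hx)⟩ (hmax _ hx)
      rwa [vscale, pt_apply_zero, pt_apply_one,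
        div_mul_cancel_of_imp fun h => le_antisymm (h ▸ hy') hy, pt_eta] at hp
    · obtain ⟨hx, hy⟩ := hstrip hp
      exact ⟨hx, hy, le_csSup (hslice _).bddAbove (by simpa [pt_eta] using hp)⟩
  exact ⟨f, ⟨hf0, upperSemicontinuousOn_of_isClosed_hypo hf0 (hfK ▸ hK.isClosed)⟩, hfK⟩

/-- Completeness of `(𝓔, ℍ)`: every `ℍ`-Cauchy sequence of nonnegative USC
functions on `[0,1]` converges in `ℍ` to a nonnegative USC function. -/
theorem stmt_10 (F : ℕ → ℝ → ℝ) (hF : ∀ n, memE (F n))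
    (hcauchy : ∀ ε : ℝ, 0 < ε → ∃ N : ℕ, ∀ m ≥ N, ∀ n ≥ N, HH (F m) (F n) < ε) :
    ∃ f : ℝ → ℝ, memE f ∧
      Filter.Tendsto (fun n => HH (F n) f) Filter.atTop (nhds 0) := by
  let K : ℕ → NonemptyCompacts ℝ² := fun n => hypoCompacts (hF n)
  have hK : CauchySeq K := Metric.cauchySeq_iff.2 hcauchy
  obtain ⟨L, hL⟩ := cauchySeq_tendsto_of_complete hK
  have hLshape : IsHypoShaped L := isClosed_setOf_isHypoShaped.mem_of_tendsto hL
    (Eventually.of_forall fun n => isHypoShaped_hypo (hF n).1)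
  obtain ⟨f, hf, hfL⟩ := exists_memE_hypo_eq L.isCompact hLshape
  refine ⟨f, hf, ?_⟩
  have hdist : ∀ n, HH (F n) f = dist (K n) L := fun n => by rw [HH, hfL]; rfl
  simpa only [hdist] using tendsto_iff_dist_tendsto_zero.1 hL
end

section
/- If fₙ, f ∈ 𝓔 and ℍ(fₙ, f) → 0, then max_{x∈[0,1]} fₙ(x) → max_{x∈[0,1]} f(x). -/
/-! The maximum of `f ∈ 𝓔` is the height of its hypograph, and height is `1`-Lipschitz for the
Hausdorff distance: a point `(x, g x)` at the top of `H_g` lies within `ℍ(g, f)` of some point of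
`H_f`, whose height is at most `max f`. Hence `|max g - max f| ≤ ℍ(g, f)`. -/

open Set Metric Filter

lemma isBounded_hypo_s13 {f : ℝ → ℝ} (hf : BddAbove (f '' Icc 0 1)) :
    Bornology.IsBounded (hypo f) := by
  obtain ⟨M, hM⟩ := hf
  refine ((PiLp.antilipschitzWith_ofLp 2 _).isBounded_preimage
    (isBounded_Icc (0 : Fin 2 → ℝ) ![1, M])).subset ?_
  rintro p ⟨hp0, hp1, hpf⟩
  simp only [mem_preimage, mem_Icc, Pi.le_def, Fin.forall_fin_two]
  exact ⟨⟨hp0.1, hp1⟩, hp0.2, hpf.trans (hM ⟨p 0, hp0, rfl⟩)⟩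

namespace memE

variable {f g : ℝ → ℝ}

lemma bddAbove_image (hf : memE f) : BddAbove (f '' Icc 0 1) :=
  hf.2.bddAbove_of_isCompact isCompact_Icc

lemma hypo_nonempty (hf : memE f) : (hypo f).Nonempty :=
  ⟨!₂[0, 0], ⟨left_mem_Icc.2 zero_le_one, le_rfl, hf.1 0 (by simp)⟩⟩

lemma hausdorffEDist_hypo_ne_top (hg : memE g) (hf : memE f) :
    hausdorffEDist (hypo g) (hypo f) ≠ ⊤ :=
  hausdorffEDist_ne_top_of_nonempty_of_bounded hg.hypo_nonempty hf.hypo_nonempty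
    (isBounded_hypo_s13 hg.bddAbove_image) (isBounded_hypo_s13 hf.bddAbove_image)

lemma le_sSup_add_HH (hg : memE g) (hf : memE f) {x : ℝ} (hx : x ∈ Icc 0 1) :
    g x ≤ sSup (f '' Icc 0 1) + HH g f := by
  have hp : !₂[x, g x] ∈ hypo g := ⟨hx, hg.1 x hx, le_rfl⟩
  calc g x ≤ sSup (f '' Icc 0 1) + infDist !₂[x, g x] (hypo f) := by
        rw [← sub_le_iff_le_add', le_infDist hf.hypo_nonempty]
        intro q hq
        calc g x - sSup (f '' Icc 0 1) ≤ g x - q 1 :=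
              sub_le_sub_left (hq.2.2.trans (le_csSup hf.bddAbove_image ⟨q 0, hq.1, rfl⟩)) _
          _ ≤ dist (g x) (q 1) := (le_abs_self _).trans_eq (Real.dist_eq _ _).symm
          _ ≤ dist !₂[x, g x] q := PiLp.dist_apply_le (!₂[x, g x]) q 1
    _ ≤ sSup (f '' Icc 0 1) + HH g f :=
        add_le_add_right (infDist_le_hausdorffDist_of_mem hp (hg.hausdorffEDist_hypo_ne_top hf)) _

lemma sSup_le_sSup_add_HH (hg : memE g) (hf : memE f) :
    sSup (g '' Icc 0 1) ≤ sSup (f '' Icc 0 1) + HH g f :=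
  csSup_le ((nonempty_Icc.2 zero_le_one).image g)
    (forall_mem_image.2 fun _ hx => hg.le_sSup_add_HH hf hx)

lemma dist_sSup_image_le_HH (hg : memE g) (hf : memE f) :
    dist (sSup (g '' Icc 0 1)) (sSup (f '' Icc 0 1)) ≤ HH g f := by
  have hgf := hg.sSup_le_sSup_add_HH hf
  have hfg := hf.sSup_le_sSup_add_HH hg
  rw [HH, hausdorffDist_comm, ← HH] at hfg
  rw [Real.dist_eq, abs_sub_le_iff]
  constructor <;> linarith

end memE

/-- If `ℍ(fₙ, f) → 0` then the maxima converge: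
`max_{x∈[0,1]} fₙ(x) → max_{x∈[0,1]} f(x)`. -/
theorem stmt_13 (F : ℕ → ℝ → ℝ) (f : ℝ → ℝ) (hF : ∀ n, memE (F n)) (hf : memE f)
    (hconv : Filter.Tendsto (fun n => HH (F n) f) Filter.atTop (nhds 0)) :
    Filter.Tendsto (fun n => sSup (F n '' Set.Icc (0:ℝ) 1)) Filter.atTop
      (nhds (sSup (f '' Set.Icc (0:ℝ) 1))) := by
  rw [tendsto_iff_dist_tendsto_zero]
  exact squeeze_zero (fun _ => dist_nonneg) (fun n => (hF n).dist_sSup_image_le_HH hf) hconv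
end
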